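/- Gelfand–Mazur theorem in characteristic 1: let F be a commutative perfect semi-field of characteristic 1 satisfying Assumptions 1 and 2 which is Banach, and let ∼ be a maximal congruence on F. Then there exists a character φ : F → ℝ with φ(E) = 1 such that for all X, Y ∈ F, X ∼ Y if and only if φ(X) = φ(Y); equivalently, the quotient F/∼ is isomorphic as a semi-field to (ℝ, max, +) via the map sending the class of X to φ(X). -/

import Mathlib

open scoped Pointwise

/-- A commutative perfect semi-field of characteristic `1`: an abelian group `(F, +, 0)`
together with a commutative, associative, idempotent operation `⊕` over which `+`
distributes, and such that `X ↦ n • X` is surjective for every `n > 0`. -/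
class CharOneSemifield (F : Type*) extends AddCommGroup F where
  oplus : F → F → F
  oplus_comm : ∀ X Y : F, oplus X Y = oplus Y X
  oplus_assoc : ∀ X Y Z : F, oplus (oplus X Y) Z = oplus X (oplus Y Z)
  oplus_idem : ∀ X : F, oplus X X = X
  add_oplus : ∀ X Y Z : F, X + oplus Y Z = oplus (X + Y) (X + Z)
  perfect : ∀ n : ℕ, 0 < n → Function.Surjective (fun X : F => n • X)

namespace CharOneSemifield

variable {F : Type*} [CharOneSemifield F]

/-- The canonical partial order on `F`: `X ≤ Y` iff `X ⊕ Y = Y`. -/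
def cle (X Y : F) : Prop := oplus X Y = Y

/-- Assumption 1: every element is dominated by (rational multiples of) `E`:
for every `X` there are naturals `a, b` with `b > 0` and `-(a • E) ≤ b • X ≤ a • E`. -/
def Assumption1 (E : F) : Prop :=
  ∀ X : F, ∃ a b : ℕ, 0 < b ∧ cle (-(a • E)) (b • X) ∧ cle (b • X) (a • E)

/-- `rval E X` is the infimum in `ℝ` of the ratios `a / b` over the pairs of naturals
`(a, b)` with `b > 0` and `-(a • E) ≤ b • X ≤ a • E`. -/
noncomputable def rval (E X : F) : ℝ :=
  sInf {t : ℝ | ∃ a b : ℕ, 0 < b ∧ t = (a : ℝ) / (b : ℝ) ∧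
    cle (-(a • E)) (b • X) ∧ cle (b • X) (a • E)}

/-- Assumption 2: `r(X) = 0` implies `X = 0`. -/
def Assumption2 (E : F) : Prop := ∀ X : F, rval E X = 0 → X = 0

/-- `F` is Banach if it is (sequentially) complete for the metric `(X, Y) ↦ r (X - Y)`. -/
def IsBanach (E : F) : Prop :=
  ∀ u : ℕ → F,
    (∀ ε : ℝ, 0 < ε → ∃ N : ℕ, ∀ m ≥ N, ∀ n ≥ N, rval E (u m - u n) < ε) →
    ∃ L : F, ∀ ε : ℝ, 0 < ε → ∃ N : ℕ, ∀ n ≥ N, rval E (u n - L) < ε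

/-- A character of `F`: a map `φ : F → ℝ`, not identically zero, turning `⊕` into `max`
and `+` into `+`. -/
def IsChar (φ : F → ℝ) : Prop :=
  (∃ X : F, φ X ≠ 0) ∧
  (∀ X Y : F, φ (oplus X Y) = max (φ X) (φ Y)) ∧
  (∀ X Y : F, φ (X + Y) = φ X + φ Y)

/-- The spectrum `S_E(F)`: the set of characters normalized by `φ E = 1`, viewed as a
subset of the product space `F → ℝ` (topology of pointwise convergence). -/
def specE (E : F) : Set (F → ℝ) := {φ : F → ℝ | IsChar φ ∧ φ E = 1}

/-- A congruence on `F`: an equivalence relation compatible with `-`, `+` and `⊕`. -/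
structure IsCongruence (r : F → F → Prop) : Prop where
  equiv : Equivalence r
  neg_compat : ∀ {X Y : F}, r X Y → r (-X) (-Y)
  add_compat : ∀ {X Y : F} (Z : F), r X Y → r (X + Z) (Y + Z)
  oplus_compat : ∀ {X Y : F} (Z : F), r X Y → r (oplus X Z) (oplus Y Z)

/-- A maximal congruence: a non-trivial congruence such that every coarser congruence is
either equal to it or trivial. -/
def IsMaximalCongruence (rel : F → F → Prop) : Prop :=
  IsCongruence rel ∧ (¬ ∀ X Y : F, rel X Y) ∧
  ∀ s : F → F → Prop, IsCongruence s → (∀ X Y : F, rel X Y → s X Y) →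
    (∀ X Y : F, s X Y ↔ rel X Y) ∨ (∀ X Y : F, s X Y)

end CharOneSemifield

open CharOneSemifield

/-!
The canonical order makes `F` a lattice-ordered abelian group, and so is its quotient `Q` by a
congruence `∼`. For `a ≠ 0` in `Q`, "`|U - V| ≤ n • |a|` in `Q` for some `n`" is a congruence
coarser than `∼` that relates a lift of `a` to `0`; if `∼` is maximal it is therefore trivial, so
every element of `Q` is bounded by a multiple of `|a|`. Applied to the disjoint positive and
negative parts of an element this makes `Q` totally ordered, and then also Archimedean, while
Assumption 1 makes the class of `E` positive. Hölder's theorem embeds `Q` into `ℝ` as an ordered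
group; normalising the embedding at `E` gives `φ`.
-/

theorem pos_of_forall_exists_nsmul_mem_Icc {G : Type*} [AddCommGroup G] [LinearOrder G]
    [IsOrderedAddMonoid G] [Nontrivial G] {e : G}
    (he : ∀ x : G, ∃ a b : ℕ, 0 < b ∧ b • x ∈ Set.Icc (-(a • e)) (a • e)) : 0 < e := by
  by_contra! hle
  obtain ⟨x, hx⟩ := exists_ne (0 : G)
  obtain ⟨a, b, hb, hlo, hhi⟩ := he x
  have hae : a • e ≤ 0 := nsmul_nonpos hle a
  refine hx (le_antisymm ?_ ?_)
  · exact (nsmul_nonpos_iff hb.ne').mp (hhi.trans hae)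
  · exact (nsmul_nonneg_iff hb.ne').mp ((neg_nonneg.mpr hae).trans hlo)

section LatticeOrderedGroup

variable {G : Type*} [AddCommGroup G] [Lattice G] [IsOrderedAddMonoid G]

theorem inf_add_le_add_inf {a b c : G} (ha : 0 ≤ a) (hb : 0 ≤ b) (hc : 0 ≤ c) :
    a ⊓ (b + c) ≤ a ⊓ b + a ⊓ c := by
  rw [inf_add, add_inf, add_inf]
  refine le_inf (le_inf ?_ ?_) (le_inf ?_ inf_le_right)
  · exact inf_le_left.trans (le_add_of_nonneg_left ha)
  · exact inf_le_left.trans (le_add_of_nonneg_right hc)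
  · exact inf_le_left.trans (le_add_of_nonneg_left hb)

theorem inf_nsmul_eq_zero {a b : G} (ha : 0 ≤ a) (hb : 0 ≤ b) (hab : a ⊓ b = 0) (n : ℕ) :
    a ⊓ n • b = 0 := by
  induction n with
  | zero => simpa using inf_eq_right.mpr ha
  | succ n ih =>
    refine le_antisymm ?_ (le_inf ha (nsmul_nonneg hb _))
    calc a ⊓ (n + 1) • b = a ⊓ (n • b + b) := by rw [succ_nsmul]
      _ ≤ a ⊓ n • b + a ⊓ b := inf_add_le_add_inf ha (nsmul_nonneg hb _) hb
      _ = 0 := by rw [ih, hab, add_zero]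

variable (hG : ∀ a : G, a ≠ 0 → ∀ y : G, ∃ n : ℕ, |y| ≤ n • |a|)
include hG

theorem le_total_of_forall_abs_le_nsmul (x y : G) : x ≤ y ∨ y ≤ x := by
  by_cases hpos : (x - y)⁺ = 0
  · exact .inl (sub_nonpos.mp (posPart_eq_zero.mp hpos))
  · obtain ⟨n, hn⟩ := hG _ hpos (x - y)⁻
    rw [abs_of_nonneg (negPart_nonneg _), abs_of_nonneg (posPart_nonneg _)] at hn
    have hneg : (x - y)⁻ = 0 := by
      rw [← inf_eq_left.mpr hn]
      exact inf_nsmul_eq_zero (negPart_nonneg _) (posPart_nonneg _)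
        (by rw [inf_comm, posPart_inf_negPart_eq_zero]) n
    exact .inr (sub_nonneg.mp (negPart_eq_zero.mp hneg))

theorem archimedean_of_forall_abs_le_nsmul : Archimedean G :=
  ⟨fun x y hy => (hG y hy.ne' x).imp fun _ hn => (le_abs_self x).trans (abs_of_pos hy ▸ hn)⟩

theorem exists_injective_addMonoidHom_real_map_sup [Nontrivial G] {e : G}
    (he : ∀ x : G, ∃ a b : ℕ, 0 < b ∧ b • x ∈ Set.Icc (-(a • e)) (a • e)) :
    ∃ f : G →+ ℝ, Function.Injective f ∧ f e = 1 ∧ ∀ x y, f (x ⊔ y) = max (f x) (f y) := by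
  classical
  have : Std.Total (α := G) (· ≤ ·) := ⟨le_total_of_forall_abs_le_nsmul hG⟩
  let : LinearOrder G := Lattice.toLinearOrder G
  have : Archimedean G := archimedean_of_forall_abs_le_nsmul hG
  obtain ⟨f, hf⟩ := Archimedean.exists_orderAddMonoidHom_real_injective G
  have hfe : 0 < f e := by
    simpa using
      (OrderHomClass.mono f).strictMono_of_injective hf (pos_of_forall_exists_nsmul_mem_Icc he)
  refine ⟨(f e)⁻¹ • (f : G →+ ℝ), fun x y hxy => hf ?_, ?_, fun x y => ?_⟩
  · simpa [hfe.ne'] using hxy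
  · simp [hfe.ne']
  · simp only [AddMonoidHom.smul_apply, smul_eq_mul, OrderAddMonoidHom.coe_addMonoidHom]
    rw [← mul_max_of_nonneg _ _ (inv_nonneg.mpr hfe.le), ← (OrderHomClass.mono f).map_max]

end LatticeOrderedGroup

namespace CharOneSemifield

variable {F : Type*} [CharOneSemifield F]

instance : Max F := ⟨oplus⟩

instance : SemilatticeSup F := SemilatticeSup.mk' oplus_comm oplus_assoc oplus_idem

theorem cle_iff_le {X Y : F} : cle X Y ↔ X ≤ Y := Iff.rfl

instance : IsOrderedAddMonoid F where
  add_le_add_left X Y h Z := by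
    change oplus (X + Z) (Y + Z) = Y + Z
    rw [add_comm X, add_comm Y, ← add_oplus]; exact congrArg (Z + ·) h

instance : Lattice F where
  inf X Y := -(-X ⊔ -Y)
  inf_le_left X Y := by simpa using neg_le_neg (le_sup_left : -X ≤ -X ⊔ -Y)
  inf_le_right X Y := by simpa using neg_le_neg (le_sup_right : -Y ≤ -X ⊔ -Y)
  le_inf X Y Z hY hZ := by simpa using neg_le_neg (sup_le (neg_le_neg hY) (neg_le_neg hZ))

variable {rel : F → F → Prop}

namespace IsCongruence

variable (hc : IsCongruence rel)

def addCon : AddCon F where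
  r := rel
  iseqv := hc.equiv
  add' {_ x y _} h h' :=
    hc.equiv.trans (hc.add_compat y h) (by simpa only [add_comm x] using hc.add_compat x h')

def Quotient : Type _ := hc.addCon.Quotient

instance : CharOneSemifield hc.Quotient where
  toAddCommGroup := inferInstanceAs (AddCommGroup hc.addCon.Quotient)
  oplus := Quotient.map₂ oplus fun _ X' h _ Y h' => hc.equiv.trans (hc.oplus_compat _ h)
    (by simpa only [oplus_comm X'] using hc.oplus_compat X' h')
  oplus_comm := by rintro ⟨X⟩ ⟨Y⟩; exact congrArg _ (oplus_comm X Y)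
  oplus_assoc := by rintro ⟨X⟩ ⟨Y⟩ ⟨Z⟩; exact congrArg _ (oplus_assoc X Y Z)
  oplus_idem := by rintro ⟨X⟩; exact congrArg _ (oplus_idem X)
  add_oplus := by rintro ⟨X⟩ ⟨Y⟩ ⟨Z⟩; exact congrArg _ (add_oplus X Y Z)
  perfect n hn := by
    rintro ⟨X⟩
    obtain ⟨Y, rfl⟩ := perfect n hn X
    exact ⟨hc.addCon.mk' Y, map_nsmul hc.addCon.mk' n Y⟩

def mkQ : F →+ hc.Quotient := hc.addCon.mk'

theorem mkQ_sup (X Y : F) : hc.mkQ (X ⊔ Y) = hc.mkQ X ⊔ hc.mkQ Y := rfl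

theorem mkQ_eq_mkQ {X Y : F} : hc.mkQ X = hc.mkQ Y ↔ rel X Y := hc.addCon.eq

theorem mkQ_surjective : Function.Surjective hc.mkQ := hc.addCon.mk'_surjective

theorem mkQ_mono : Monotone hc.mkQ := fun X Y h => by
  rw [← sup_eq_right, ← mkQ_sup, sup_eq_right.mpr h]

theorem assumption1_mkQ {E : F} (h1 : Assumption1 E) : Assumption1 (hc.mkQ E) := by
  intro x
  obtain ⟨X, rfl⟩ := hc.mkQ_surjective x
  obtain ⟨a, b, hb, hlo, hhi⟩ := h1 X
  refine ⟨a, b, hb, ?_, ?_⟩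
  · simpa only [cle_iff_le, map_nsmul, map_neg] using hc.mkQ_mono hlo
  · simpa only [cle_iff_le, map_nsmul] using hc.mkQ_mono hhi

theorem isCongruence_abs_sub_le_nsmul (a : hc.Quotient) :
    IsCongruence fun U V => ∃ n : ℕ, |hc.mkQ U - hc.mkQ V| ≤ n • a where
  equiv :=
    { refl _ := ⟨0, by simp⟩
      symm := fun ⟨n, h⟩ => ⟨n, abs_sub_comm (hc.mkQ _) _ ▸ h⟩
      trans := fun ⟨n, h⟩ ⟨m, h'⟩ => ⟨n + m, by
        rw [add_nsmul, ← sub_add_sub_cancel]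
        exact (abs_add_le _ _).trans (add_le_add h h')⟩ }
  neg_compat := fun ⟨n, h⟩ => ⟨n, by rwa [map_neg, map_neg, ← neg_sub', abs_neg]⟩
  add_compat Z := fun ⟨n, h⟩ => ⟨n, by rwa [map_add, map_add, add_sub_add_right_eq_sub]⟩
  oplus_compat Z := fun ⟨n, h⟩ => ⟨n, (abs_sup_sub_sup_le_abs _ _ (hc.mkQ Z)).trans h⟩

end IsCongruence

namespace IsMaximalCongruence

variable (hm : IsMaximalCongruence rel)
include hm

theorem nontrivial_quotient : Nontrivial hm.1.Quotient := by
  obtain ⟨X, Y, h⟩ : ∃ X Y, ¬ rel X Y := by simpa using hm.2.1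
  exact ⟨⟨hm.1.mkQ X, hm.1.mkQ Y, mt hm.1.mkQ_eq_mkQ.mp h⟩⟩

theorem exists_abs_le_nsmul (a : hm.1.Quotient) (ha : a ≠ 0) (y : hm.1.Quotient) :
    ∃ n : ℕ, |y| ≤ n • |a| := by
  obtain ⟨A, rfl⟩ := hm.1.mkQ_surjective a
  obtain ⟨Y, rfl⟩ := hm.1.mkQ_surjective y
  rcases hm.2.2 _ (hm.1.isCongruence_abs_sub_le_nsmul |hm.1.mkQ A|)
    (fun X Y h => ⟨0, by simp [hm.1.mkQ_eq_mkQ.mpr h]⟩) with h | h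
  · exact absurd (hm.1.mkQ_eq_mkQ.mpr ((h A 0).mp ⟨1, by simp⟩)) (by simpa using ha)
  · simpa using h Y 0

end IsMaximalCongruence

end CharOneSemifield

theorem stmt13_general {F : Type*} [CharOneSemifield F] (E : F)
    (h1 : Assumption1 E)
    (rel : F → F → Prop) (hm : IsMaximalCongruence rel) :
    ∃ φ : F → ℝ, IsChar φ ∧ φ E = 1 ∧ ∀ X Y : F, rel X Y ↔ φ X = φ Y := by
  have := hm.nontrivial_quotient
  obtain ⟨f, hf_inj, hfE, hf_sup⟩ := exists_injective_addMonoidHom_real_map_sup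
    hm.exists_abs_le_nsmul (hm.1.assumption1_mkQ h1)
  refine ⟨f.comp hm.1.mkQ, ⟨⟨E, by simp [hfE]⟩, fun X Y => hf_sup (hm.1.mkQ X) (hm.1.mkQ Y),
    map_add _⟩, hfE, fun X Y => ?_⟩
  rw [AddMonoidHom.comp_apply, AddMonoidHom.comp_apply, hf_inj.eq_iff, hm.1.mkQ_eq_mkQ]

/-- Gelfand–Mazur in characteristic 1: for a maximal congruence `∼` on a
Banach semi-field there is a character `φ` with `φ E = 1` such that `X ∼ Y ↔ φ X = φ Y`;
equivalently `F/∼ ≃ (ℝ, max, +)` via the class of `X ↦ φ X`. -/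
theorem stmt13 {F : Type*} [CharOneSemifield F] (E : F)
    (h1 : Assumption1 E) (h2 : Assumption2 E) (hB : IsBanach E)
    (rel : F → F → Prop) (hm : IsMaximalCongruence rel) :
    ∃ φ : F → ℝ, IsChar φ ∧ φ E = 1 ∧ ∀ X Y : F, rel X Y ↔ φ X = φ Y :=
  stmt13_general E h1 rel hm
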